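/- Let P be a definite program and S a specification. If every atom A ∈ S is covered by P w.r.t. S, and P is recurrent w.r.t. some level mapping, then P is complete w.r.t. S, i.e. S ⊆ M_P. -/

import Mathlib

/-! Every Herbrand model `M` of `P` contains `S`, by well-founded induction on the level: an atom
of `S` heads a clause whose body atoms lie in `S` at strictly lower level, hence in `M`, so the
head lies in `M` as well. The least Herbrand model is the intersection of all models. -/

variable {A : Type*}

/-- A ground clause over atoms `A`: a head with a list of body atoms. -/
abbrev ClauseG (A : Type*) := A × List A

/-- `S` is an Herbrand model of the (ground instantiation of the) program `P`. -/
def IsModelG (S : Set A) (P : Set (ClauseG A)) : Prop :=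
  ∀ c ∈ P, (∀ b ∈ c.2, b ∈ S) → c.1 ∈ S

/-- The least Herbrand model of `P`. -/
def LHMG (P : Set (ClauseG A)) : Set A := ⋂₀ {S | IsModelG S P}

/-- A ground atom `H` is covered by `P` w.r.t. `S`. -/
def CoveredG (P : Set (ClauseG A)) (S : Set A) (H : A) : Prop :=
  ∃ c ∈ P, c.1 = H ∧ ∀ b ∈ c.2, b ∈ S

/-- `P` is recurrent w.r.t. the level mapping `lvl`. -/
def RecurrentG (P : Set (ClauseG A)) (lvl : A → ℕ) : Prop :=
  ∀ c ∈ P, ∀ b ∈ c.2, lvl b < lvl c.1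

theorem RecurrentG.subset_of_isModelG {P : Set (ClauseG A)} {S M : Set A} {lvl : A → ℕ}
    (hrec : RecurrentG P lvl) (hcov : ∀ H ∈ S, CoveredG P S H) (hM : IsModelG M P) :
    S ⊆ M := by
  intro H hH
  induction H using (measure lvl).wf.induction with
  | _ H ih =>
    obtain ⟨c, hc, rfl, hbody⟩ := hcov H hH
    exact hM c hc fun b hb => ih b (hrec c hc b hb) (hbody b hb)

/-- If every atom of `S` is covered by `P` w.r.t. `S` and `P` is recurrent
w.r.t. some level mapping, then `P` is complete w.r.t. `S`: `S ⊆ M_P`. -/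
theorem completeness_criterion (P : Set (ClauseG A)) (S : Set A)
    (hcov : ∀ H ∈ S, CoveredG P S H)
    (lvl : A → ℕ) (hrec : RecurrentG P lvl) : S ⊆ LHMG P :=
  Set.subset_sInter fun _ hM => hrec.subset_of_isModelG hcov hM
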